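/- Let G₁, G₂ : SimpleGraph (Fin n) be simple graphs with ℕ-valued adjacency matrices A and B (so A i j = 1 if G₁.Adj i j and 0 otherwise, and similarly for B), and let σ be a permutation of Fin n. Call an edge e of G₁ conserved under σ if Sym2.map σ e is an edge of G₂. Then twice the number of conserved edges equals the alignment objective: 2 * (card of {e ∈ G₁.edgeFinset : Sym2.map σ e ∈ G₂.edgeSet}) = ∑_{i} ∑_{j} A i j * B (σ i) (σ j). -/

import Mathlib

open BigOperators

/-- Twice the number of edges of `G₁` conserved under the vertex bijection `σ`
equals the alignment objective `∑ i ∑ j, A i j * B (σ i) (σ j)`, where `A` and `B`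
are the ℕ-valued adjacency matrices of `G₁` and `G₂`. -/
theorem two_mul_conserved_edges_eq_objective (n : ℕ)
    (G₁ G₂ : SimpleGraph (Fin n)) [DecidableRel G₁.Adj] [DecidableRel G₂.Adj]
    (A B : Matrix (Fin n) (Fin n) ℕ)
    (hA : ∀ i j, A i j = if G₁.Adj i j then 1 else 0)
    (hB : ∀ i j, B i j = if G₂.Adj i j then 1 else 0)
    (σ : Equiv.Perm (Fin n)) :
    2 * (G₁.edgeFinset.filter (fun e => Sym2.map σ e ∈ G₂.edgeSet)).card =
      ∑ i, ∑ j, A i j * B (σ i) (σ j) := by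
  classical
  let H : SimpleGraph (Fin n) :=
    { Adj := fun i j => G₁.Adj i j ∧ G₂.Adj (σ i) (σ j)
      symm := ⟨fun i j h => ⟨h.1.symm, h.2.symm⟩⟩
      loopless := ⟨fun i h => G₁.loopless.irrefl i h.1⟩ }
  haveI : DecidableRel H.Adj := fun i j => instDecidableAnd
  have hset : (G₁.edgeFinset.filter (fun e => Sym2.map σ e ∈ G₂.edgeSet)) = H.edgeFinset := by
    ext e
    induction e with
    | _ i j =>
      simp [SimpleGraph.mem_edgeFinset, SimpleGraph.mem_edgeSet, H]
  rw [hset, SimpleGraph.two_mul_card_edgeFinset, Finset.card_filter,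
    ← Finset.univ_product_univ, Finset.sum_product]
  refine Finset.sum_congr rfl fun i _ => Finset.sum_congr rfl fun j _ => ?_
  rw [hA, hB]
  by_cases h1 : G₁.Adj i j <;> by_cases h2 : G₂.Adj (σ i) (σ j) <;>
    simp [H, h1, h2]
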